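/- The mixed σ-k derivative of the Inverse-option Black–Scholes price at the money admits the closed form: for all τ > 0, x ∈ ℝ and σ > 0, ∂_σ ∂_k BS(τ,x,k,σ) evaluated at k = x equals (3√τ/(2√(2π))) e^{−σ²τ/8} − στ e^{σ²τ} Erfc(3σ√τ/(2√2)). -/

import Mathlib

open Real MeasureTheory Set Filter

/-- Standard normal CDF `N(z) = (2π)^{-1/2} ∫_{-∞}^z e^{-t²/2} dt`. -/
noncomputable def Ncdf (z : ℝ) : ℝ :=
  (Real.sqrt (2 * Real.pi))⁻¹ * ∫ t in Set.Iic z, Real.exp (-t ^ 2 / 2)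

/-- Standard normal density `φ(z) = (2π)^{-1/2} e^{-z²/2}`. -/
noncomputable def phi (z : ℝ) : ℝ :=
  (Real.sqrt (2 * Real.pi))⁻¹ * Real.exp (-z ^ 2 / 2)

/-- `d₂ = (x-k)/(σ√τ) - σ√τ/2`. -/
noncomputable def d2 (τ x k σ : ℝ) : ℝ :=
  (x - k) / (σ * Real.sqrt τ) - σ * Real.sqrt τ / 2

/-- `d₁ = d₂ - σ√τ`. -/
noncomputable def d1 (τ x k σ : ℝ) : ℝ :=
  d2 τ x k σ - σ * Real.sqrt τ

/-- Black–Scholes price of an Inverse European call: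
`BS(τ,x,k,σ) = N(d₂) - e^{σ²τ + k - x} N(d₁)`. -/
noncomputable def BS (τ x k σ : ℝ) : ℝ :=
  Ncdf (d2 τ x k σ) - Real.exp (σ ^ 2 * τ + k - x) * Ncdf (d1 τ x k σ)

/-- Complementary error function `Erfc(z) = (2/√π) ∫_z^∞ e^{-t²} dt`. -/
noncomputable def Erfc (z : ℝ) : ℝ :=
  2 / Real.sqrt Real.pi * ∫ t in Set.Ioi z, Real.exp (-t ^ 2)

/-- `H(τ,x,k,σ) = ½ (∂³ₓₓₓ BS - ∂²ₓₓ BS)(τ,x,k,σ)`. -/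
noncomputable def Hfun (τ x k σ : ℝ) : ℝ :=
  (1 / 2) * (iteratedDeriv 3 (fun x' => BS τ x' k σ) x
    - iteratedDeriv 2 (fun x' => BS τ x' k σ) x)

/-- `G(τ,x,k,σ) = ∂ₖ H(τ,x,k,σ) - H(τ,x,k,σ)`. -/
noncomputable def Gfun (τ x k σ : ℝ) : ℝ :=
  deriv (fun k' => Hfun τ x k' σ) k - Hfun τ x k σ

open Topology
lemma gauss_integrable : Integrable (fun t : ℝ => Real.exp (-t ^ 2 / 2)) := by
  have h := integrable_exp_neg_mul_sq (show (0:ℝ) < 1/2 by norm_num)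
  have : (fun t : ℝ => Real.exp (-t ^ 2 / 2)) = fun t : ℝ => Real.exp (-(1/2) * t ^ 2) := by
    funext t; ring_nf
  rw [this]; exact h

lemma hasDerivAt_Ncdf (z : ℝ) : HasDerivAt Ncdf (phi z) z := by
  have hint := gauss_integrable
  have hc : Continuous fun t : ℝ => Real.exp (-t ^ 2 / 2) := by continuity
  have key : Ncdf = fun w =>
      Ncdf 0 + (Real.sqrt (2 * Real.pi))⁻¹ * ∫ t in (0:ℝ)..w, Real.exp (-t ^ 2 / 2) := by
    funext w
    have := intervalIntegral.integral_Iic_sub_Iic (μ := volume)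
      (hint.integrableOn) (hint.integrableOn) (a := (0:ℝ)) (b := w)
    simp only [Ncdf]
    rw [← this]; ring
  have h1 : HasDerivAt (fun w => ∫ t in (0:ℝ)..w, Real.exp (-t ^ 2 / 2))
      (Real.exp (-z ^ 2 / 2)) z :=
    intervalIntegral.integral_hasDerivAt_right (hint.intervalIntegrable)
      (hc.stronglyMeasurableAtFilter _ _) hc.continuousAt
  rw [key]
  exact ((h1.const_mul ((Real.sqrt (2 * Real.pi))⁻¹)).const_add (Ncdf 0))


lemma hasDerivAt_BS_k (τ x k σ : ℝ) (hτ : 0 < τ) (hσ : σ ≠ 0) :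
    HasDerivAt (fun k' => BS τ x k' σ)
      (-(Real.exp (σ ^ 2 * τ + k - x) * Ncdf (d1 τ x k σ))) k := by
  have hu : Real.sqrt τ * Real.sqrt τ = τ := Real.mul_self_sqrt hτ.le
  set s := σ * Real.sqrt τ with hs
  have hs0 : s ≠ 0 := mul_ne_zero hσ (Real.sqrt_pos.mpr hτ).ne'
  have hd2 : HasDerivAt (fun k' => d2 τ x k' σ) (-1 / s) k := by
    have h := (((hasDerivAt_id k).const_sub x).div_const s).sub_const (s / 2)
    simpa [d2, hs] using h
  have hd1 : HasDerivAt (fun k' => d1 τ x k' σ) (-1 / s) k := by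
    simpa [d1] using hd2.sub_const s
  have hN2 : HasDerivAt (fun k' => Ncdf (d2 τ x k' σ))
      (phi (d2 τ x k σ) * (-1 / s)) k := (hasDerivAt_Ncdf _).comp k hd2
  have hN1 : HasDerivAt (fun k' => Ncdf (d1 τ x k' σ))
      (phi (d1 τ x k σ) * (-1 / s)) k := (hasDerivAt_Ncdf _).comp k hd1
  have hexp : HasDerivAt (fun k' => Real.exp (σ ^ 2 * τ + k' - x))
      (Real.exp (σ ^ 2 * τ + k - x)) k := by
    have h := (((hasDerivAt_id k).const_add (σ ^ 2 * τ)).sub_const x).exp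
    simpa using h
  have hkey : Real.exp (σ ^ 2 * τ + k - x) * phi (d1 τ x k σ) = phi (d2 τ x k σ) := by
    simp only [phi]
    rw [← mul_assoc, mul_comm (Real.exp _) _, mul_assoc, ← Real.exp_add]
    congr 1
    simp only [d1, d2, hs]
    rw [Real.exp_eq_exp]
    field_simp
    linear_combination (-(8:ℝ)) * σ^4 * Real.sqrt τ ^ 2 * hu
  have h := hN2.sub (hexp.mul hN1)
  have : HasDerivAt (fun k' => BS τ x k' σ)
      (phi (d2 τ x k σ) * (-1 / s) -
        (Real.exp (σ ^ 2 * τ + k - x) * Ncdf (d1 τ x k σ) +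
          Real.exp (σ ^ 2 * τ + k - x) * (phi (d1 τ x k σ) * (-1 / s)))) k := by
    exact h
  convert this using 1
  linear_combination (-(1:ℝ) / s) * hkey

lemma two_Ncdf_neg (a : ℝ) : 2 * Ncdf (-a) = Erfc (a / Real.sqrt 2) := by
  have h2pos : (0:ℝ) < Real.sqrt 2 := by positivity
  have h1 : (∫ t in Set.Iic (-a), Real.exp (-t ^ 2 / 2))
      = ∫ t in Set.Ioi a, Real.exp (-t ^ 2 / 2) := by
    have h := integral_comp_neg_Iic (-a) (fun t : ℝ => Real.exp (-t ^ 2 / 2))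
    simpa [neg_sq] using h
  have h2 : (∫ t in Set.Ioi a, Real.exp (-t ^ 2 / 2))
      = Real.sqrt 2 * ∫ s in Set.Ioi (a / Real.sqrt 2), Real.exp (-s ^ 2) := by
    have h := MeasureTheory.integral_comp_mul_left_Ioi
      (fun t : ℝ => Real.exp (-t ^ 2 / 2)) (a / Real.sqrt 2) h2pos
    rw [mul_div_cancel₀ _ h2pos.ne'] at h
    have harg : (fun x : ℝ => Real.exp (-(Real.sqrt 2 * x) ^ 2 / 2))
        = fun x : ℝ => Real.exp (-x ^ 2) := by
      funext x
      congr 1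
      rw [mul_pow, Real.sq_sqrt (by norm_num : (0:ℝ) ≤ 2)]
      ring
    rw [harg] at h
    rw [h, smul_eq_mul, ← mul_assoc, mul_inv_cancel₀ h2pos.ne', one_mul]
  simp only [Ncdf, Erfc]
  rw [h1, h2, Real.sqrt_mul (by norm_num : (0:ℝ) ≤ 2)]
  have hπ : Real.sqrt Real.pi ≠ 0 := by positivity
  field_simp


/-- closed form of the mixed σ-k derivative of the Inverse call
at the money. -/
theorem stmt_11 (τ x σ : ℝ) (hτ : 0 < τ) (hσ : 0 < σ) :
    deriv (fun σ' => deriv (fun k' => BS τ x k' σ') x) σ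
      = (3 * Real.sqrt τ / (2 * Real.sqrt (2 * Real.pi))) * Real.exp (-(σ ^ 2 * τ) / 8)
        - σ * τ * Real.exp (σ ^ 2 * τ) * Erfc (3 * σ * Real.sqrt τ / (2 * Real.sqrt 2)) := by
  have hu : Real.sqrt τ * Real.sqrt τ = τ := Real.mul_self_sqrt hτ.le
  have hev : (fun σ' => deriv (fun k' => BS τ x k' σ') x)
      =ᶠ[𝓝 σ] fun σ' => -(Real.exp (σ' ^ 2 * τ) * Ncdf (-(3 * σ' * Real.sqrt τ / 2))) := by
    filter_upwards [eventually_gt_nhds hσ] with σ' hσ'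
    rw [(hasDerivAt_BS_k τ x x σ' hτ hσ'.ne').deriv]
    have hd : d1 τ x x σ' = -(3 * σ' * Real.sqrt τ / 2) := by
      simp only [d1, d2, sub_self, zero_div, zero_sub]
      ring
    rw [hd, add_sub_cancel_right]
  rw [hev.deriv_eq]
  -- derivative of the closed form
  have hA : HasDerivAt (fun σ' : ℝ => σ' ^ 2 * τ) (2 * σ * τ) σ := by
    have h := (hasDerivAt_pow 2 σ).mul_const τ
    simpa [mul_assoc] using h
  have hE := hA.exp
  have hArg : HasDerivAt (fun σ' : ℝ => -(3 * σ' * Real.sqrt τ / 2))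
      (-(3 * Real.sqrt τ / 2)) σ := by
    have h : (fun σ' : ℝ => -(3 * σ' * Real.sqrt τ / 2))
        = fun σ' : ℝ => (-(3 * Real.sqrt τ / 2)) * σ' := by funext σ'; ring
    rw [h]
    simpa using (hasDerivAt_id σ).const_mul (-(3 * Real.sqrt τ / 2))
  have hN : HasDerivAt (fun σ' => Ncdf (-(3 * σ' * Real.sqrt τ / 2)))
      (phi (-(3 * σ * Real.sqrt τ / 2)) * (-(3 * Real.sqrt τ / 2))) σ :=
    (hasDerivAt_Ncdf _).comp σ hArg
  rw [(show HasDerivAt (fun σ' => -(Real.exp (σ' ^ 2 * τ) * Ncdf (-(3 * σ' * Real.sqrt τ / 2)))) _ σ from (hE.mul hN).neg).deriv]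
  -- algebraic identities
  have hNE : Ncdf (-(3 * σ * Real.sqrt τ / 2))
      = Erfc (3 * σ * Real.sqrt τ / (2 * Real.sqrt 2)) / 2 := by
    have h := two_Ncdf_neg (3 * σ * Real.sqrt τ / 2)
    rw [div_div] at h
    linarith
  have hphi : Real.exp (σ ^ 2 * τ) * phi (-(3 * σ * Real.sqrt τ / 2))
      = (Real.sqrt (2 * Real.pi))⁻¹ * Real.exp (-(σ ^ 2 * τ) / 8) := by
    simp only [phi]
    rw [← mul_assoc, mul_comm (Real.exp _) _, mul_assoc, ← Real.exp_add]
    congr 1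
    congr 1
    linear_combination (-(9:ℝ) / 8) * σ ^ 2 * hu
  rw [hNE]
  linear_combination (3 * Real.sqrt τ / 2) * hphi
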